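/- arXiv:2302.13680 — 3 statements merged into one kernel-verified Lean document; each statement's English description precedes it below -/
import Mathlib

section
/- With $C = \widetilde{B}^{-1}B$ as above and $N > 2$, the eigenvalue $\lambda = -1/2$ of $C$ has algebraic multiplicity $2N-2$ and geometric multiplicity $N-1$. -/
/-!
Write `B̃ = [[α I, E], [E, β 𝟙𝟙ᵀ]]` and `B = -½ [[0, E], [E, 0]]` with `E = diag e`, where
`α = 1/N`, `β = -1/(νN²)`, `eⱼ = d̃ⱼ/N`. Then `B + B̃/2 = diag((α/2) I, (β/2) 𝟙𝟙ᵀ)`, so the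
kernel of `B̃ (C + I/2)`, hence of `C + I/2`, is `{(u, w) | u = 0, ∑ wⱼ = 0}`, of dimension `N - 1`.
For the algebraic multiplicity, `det B̃ · χ_C(x) = det (x B̃ - B)`. A Schur complement on the
scalar block `(x α) I` followed by the matrix determinant lemma gives
`det (x B̃ - B) = (-1)ᴺ (x + 1/2)^(2N-2) ∏ eⱼ² ((x + 1/2)² - α β x² ∑ eⱼ⁻²)`
for `x ∉ {0, -1/2}`, hence as polynomials; the last factor is `-αβ∑ eⱼ⁻²/4 ≠ 0` at `x = -1/2`.
-/

open Matrix Polynomial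

section Determinants

variable {K : Type*} [Field K] {n : Type*} [Fintype n] [DecidableEq n]

theorem Matrix.det_diagonal_add_smul_ones (t : n → K) (ht : ∀ j, t j ≠ 0) (c : K) :
    (diagonal t + c • of fun _ _ => (1 : K)).det = (∏ j, t j) * (1 + c * ∑ j, (t j)⁻¹) := by
  have hdet : IsUnit (diagonal t).det := by
    simpa [det_diagonal, Finset.prod_ne_zero_iff] using ht
  have hinv : (diagonal t)⁻¹ = diagonal fun j => (t j)⁻¹ :=
    inv_eq_right_inv (by simp [diagonal_mul_diagonal, ht])
  have hrank_one : (c • of fun _ _ => (1 : K) : Matrix n n K) =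
      replicateCol Unit (fun _ : n => c) * replicateRow Unit (fun _ : n => (1 : K)) := by
    ext i j; simp [replicateCol, replicateRow, mul_apply]
  rw [hrank_one, det_add_replicateCol_mul_replicateRow hdet, det_diagonal, hinv, det_unique]
  simp [mul_apply, replicateCol, replicateRow, diagonal_apply, Finset.mul_sum, mul_comm]

theorem Matrix.det_fromBlocks_smul_one_diagonal_smul_ones [Nonempty n] {α c β : K} (e : n → K)
    (hα : α ≠ 0) (hc : c ≠ 0) (he : ∀ j, e j ≠ 0) :
    (fromBlocks (α • 1) (c • diagonal e) (c • diagonal e) (β • of fun _ _ => 1)).det =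
      (-1) ^ Fintype.card n * c ^ (2 * Fintype.card n - 2) * (∏ j, e j ^ 2) *
        (c ^ 2 - α * β * ∑ j, (e j ^ 2)⁻¹) := by
  have hA : (α • 1 : Matrix n n K) * (α⁻¹ • 1) = 1 := by
    rw [smul_mul_smul, Matrix.mul_one, mul_inv_cancel₀ hα, one_smul]
  let : Invertible (α • 1 : Matrix n n K) := invertibleOfRightInverse _ _ hA
  have hschur : (β • of fun _ _ => 1) - c • diagonal e * ⅟(α • 1 : Matrix n n K) * c • diagonal e
      = diagonal (fun j => -(c ^ 2 / α) * e j ^ 2) + β • of fun _ _ => 1 := by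
    rw [invOf_eq_right_inv hA]
    ext i j
    by_cases h : i = j <;> simp [h]; ring
  have hu : ∀ j, -(c ^ 2 / α) * e j ^ 2 ≠ 0 := fun j => by simp [hα, hc, he]
  rw [det_fromBlocks₁₁, hschur, det_diagonal_add_smul_ones _ hu, det_smul, det_one,
    Finset.prod_mul_distrib, Finset.prod_const, Finset.card_univ]
  simp only [mul_inv, ← Finset.mul_sum]
  obtain ⟨k, hk⟩ := Nat.exists_eq_add_of_lt (Fintype.card_pos (α := n))
  rw [hk, show 2 * (0 + k + 1) - 2 = 2 * k by omega, pow_succ, neg_pow, div_pow, ← pow_mul,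
    mul_comm 2 k]
  field_simp
  ring

end Determinants

theorem Matrix.det_mul_eval_charpoly {R : Type*} [CommRing R] {n : Type*} [Fintype n]
    [DecidableEq n] (A C : Matrix n n R) (x : R) :
    A.det * C.charpoly.eval x = (x • A - A * C).det := by
  rw [eval_charpoly, ← det_mul, Matrix.mul_sub, scalar_apply, ← smul_one_eq_diagonal,
    Matrix.mul_smul, Matrix.mul_one]

theorem Polynomial.rootMultiplicity_eq_of_C_mul_eq {K : Type*} [Field K] {p q : K[X]} {a r : K}
    {k : ℕ} (h : C a * p = (X - C r) ^ k * q) (hq : q.eval r ≠ 0) :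
    p.rootMultiplicity r = k := by
  have hq0 : q ≠ 0 := fun h0 => hq (by simp [h0])
  have hp0 : C a * p ≠ 0 := by
    rw [h]; exact mul_ne_zero (pow_ne_zero _ (X_sub_C_ne_zero r)) hq0
  have := congrArg (rootMultiplicity r) h
  rwa [rootMultiplicity_mul hp0, rootMultiplicity_C, zero_add, mul_comm,
    rootMultiplicity_mul_X_sub_C_pow hq0, rootMultiplicity_eq_zero hq, zero_add] at this

theorem Matrix.ker_mulVecLin_mul_of_isUnit_det {K : Type*} [CommRing K] {n : Type*} [Fintype n]
    [DecidableEq n] {m : Type*} [Fintype m] {A : Matrix n n K} (hA : IsUnit A.det)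
    (M : Matrix n m K) : LinearMap.ker (A * M).mulVecLin = LinearMap.ker M.mulVecLin := by
  rw [mulVecLin_mul, LinearMap.ker_comp_of_ker_eq_bot]
  exact ker_mulVecLin_eq_bot_iff.2 fun v hv => by
    simpa [mulVec_mulVec, nonsing_inv_mul _ hA] using congrArg (A⁻¹ *ᵥ ·) hv

theorem Matrix.finrank_ker_fromBlocks_smul_one_smul_ones {K : Type*} [Field K]
    {m n : Type*} [Fintype m] [Fintype n] [DecidableEq m] [Nonempty n] {a b : K}
    (ha : a ≠ 0) (hb : b ≠ 0) :
    Module.finrank K (LinearMap.ker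
      (fromBlocks (a • 1) 0 0 (b • of fun _ _ => 1) : Matrix (m ⊕ n) (m ⊕ n) K).mulVecLin) =
      Fintype.card n - 1 := by
  let g : (m ⊕ n → K) →ₗ[K] (m → K) × K :=
    (LinearMap.funLeft K K Sum.inl).prod (∑ j, LinearMap.proj (Sum.inr j))
  have hker : LinearMap.ker
      (fromBlocks (a • 1) 0 0 (b • of fun _ _ => 1) : Matrix (m ⊕ n) (m ⊕ n) K).mulVecLin =
      LinearMap.ker g := by
    ext v
    simp [g, fromBlocks_mulVec, smul_mulVec, funext_iff, ha, hb, mulVec, dotProduct, -smul_of]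
  have hg : Function.Surjective g := by
    classical
    rintro ⟨w, s⟩
    refine ⟨Sum.elim w (Pi.single (Classical.arbitrary n) s), ?_⟩
    exact Prod.ext rfl (by simp [g])
  have := LinearMap.finrank_range_add_finrank_ker g
  rw [LinearMap.range_eq_top.2 hg, finrank_top, Module.finrank_prod,
    Module.finrank_fintype_fun_eq_card, Module.finrank_fintype_fun_eq_card, Module.finrank_self,
    Fintype.card_sum] at this
  rw [hker]
  omega

section Smoother

variable {K : Type*} [Field K] {n : Type*} [DecidableEq n]

def tildeB (α β : K) (e : n → K) : Matrix (n ⊕ n) (n ⊕ n) K :=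
  fromBlocks (α • 1) (diagonal e) (diagonal e) (β • of fun _ _ => 1)

def offDiagB (e : n → K) : Matrix (n ⊕ n) (n ⊕ n) K :=
  fromBlocks 0 (-(1 / 2 : K) • diagonal e) (-(1 / 2 : K) • diagonal e) 0

variable {α β : K} {e : n → K}

theorem smul_tildeB_sub_offDiagB (x : K) :
    x • tildeB α β e - offDiagB e = fromBlocks ((x * α) • 1) ((x + 1 / 2) • diagonal e)
      ((x + 1 / 2) • diagonal e) ((x * β) • of fun _ _ => 1) := by
  rw [tildeB, offDiagB, fromBlocks_smul, sub_eq_add_neg, fromBlocks_neg, fromBlocks_add]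
  congr 1 <;> module

variable [Fintype n]

theorem det_tildeB [Nonempty n] (hα : α ≠ 0) (he : ∀ j, e j ≠ 0) :
    (tildeB α β e).det =
      (-1) ^ Fintype.card n * (∏ j, e j ^ 2) * (1 - α * β * ∑ j, (e j ^ 2)⁻¹) := by
  have := det_fromBlocks_smul_one_diagonal_smul_ones (c := (1 : K)) (β := β) e hα one_ne_zero he
  rwa [one_smul, one_pow, mul_one, one_pow] at this

theorem tildeB_mul_add_half_smul_one (C : Matrix (n ⊕ n) (n ⊕ n) K)
    (hC : tildeB α β e * C = offDiagB e) :
    tildeB α β e * (C - (-(1 / 2 : K)) • 1) =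
      fromBlocks ((α / 2) • 1) 0 0 ((β / 2) • of fun _ _ => 1) := by
  rw [Matrix.mul_sub, hC, Matrix.mul_smul, Matrix.mul_one, tildeB, offDiagB, fromBlocks_smul,
    sub_eq_add_neg, fromBlocks_neg, fromBlocks_add]
  congr 1 <;> module

theorem isUnit_det_tildeB [Nonempty n] (hα : α ≠ 0) (he : ∀ j, e j ≠ 0)
    (hκ : 1 - α * β * ∑ j, (e j ^ 2)⁻¹ ≠ 0) : IsUnit (tildeB α β e).det := by
  rw [det_tildeB hα he, isUnit_iff_ne_zero]
  simp [Finset.prod_ne_zero_iff, he, hκ]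

theorem C_det_mul_charpoly_tildeB_inv_mul_offDiagB [Infinite K] [Nonempty n] (hα : α ≠ 0)
    (he : ∀ j, e j ≠ 0) (hκ : 1 - α * β * ∑ j, (e j ^ 2)⁻¹ ≠ 0) :
    Polynomial.C (tildeB α β e).det * ((tildeB α β e)⁻¹ * offDiagB e).charpoly =
      (X - Polynomial.C (-(1 / 2))) ^ (2 * Fintype.card n - 2) *
        (Polynomial.C ((-1) ^ Fintype.card n * ∏ j, e j ^ 2) *
          ((X + Polynomial.C (1 / 2)) ^ 2 - Polynomial.C (α * β * ∑ j, (e j ^ 2)⁻¹) * X ^ 2)) := by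
  refine Polynomial.eq_of_infinite_eval_eq _ _
    (((Set.toFinite {0, -(1 / 2)}).infinite_compl).mono fun x hx => ?_)
  simp only [Set.mem_compl_iff, Set.mem_insert_iff, Set.mem_singleton_iff, not_or] at hx
  have hc : x + 1 / 2 ≠ 0 := fun h => hx.2 (eq_neg_of_add_eq_zero_left h)
  rw [Set.mem_ofPred_eq, eval_mul, eval_C, det_mul_eval_charpoly,
    mul_nonsing_inv_cancel_left _ _ (isUnit_det_tildeB hα he hκ), smul_tildeB_sub_offDiagB,
    det_fromBlocks_smul_one_diagonal_smul_ones e (mul_ne_zero hx.1 hα) hc he]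
  simp only [eval_mul, eval_pow, eval_sub, eval_add, eval_X, eval_C]
  ring

variable [CharZero K] [Nonempty n]

theorem rootMultiplicity_charpoly_tildeB_inv_mul_offDiagB (hα : α ≠ 0) (he : ∀ j, e j ≠ 0)
    (hκ : 1 - α * β * ∑ j, (e j ^ 2)⁻¹ ≠ 0) (hS : α * β * ∑ j, (e j ^ 2)⁻¹ ≠ 0) :
    ((tildeB α β e)⁻¹ * offDiagB e).charpoly.rootMultiplicity (-(1 / 2)) =
      2 * Fintype.card n - 2 := by
  refine rootMultiplicity_eq_of_C_mul_eq (C_det_mul_charpoly_tildeB_inv_mul_offDiagB hα he hκ) ?_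
  have hP : ∏ j, e j ^ 2 ≠ 0 := Finset.prod_ne_zero_iff.2 fun j _ => pow_ne_zero _ (he j)
  simp only [eval_mul, eval_C, eval_pow, eval_sub, eval_add, eval_X, neg_add_cancel]
  simp [hP, hS]

theorem finrank_ker_tildeB_inv_mul_offDiagB_add_half (hα : α ≠ 0) (hβ : β ≠ 0)
    (he : ∀ j, e j ≠ 0) (hκ : 1 - α * β * ∑ j, (e j ^ 2)⁻¹ ≠ 0) :
    Module.finrank K (LinearMap.ker
      ((tildeB α β e)⁻¹ * offDiagB e - (-(1 / 2 : K)) • 1).mulVecLin) = Fintype.card n - 1 := by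
  have hdet := isUnit_det_tildeB hα he hκ
  rw [← ker_mulVecLin_mul_of_isUnit_det hdet,
    tildeB_mul_add_half_smul_one _ (mul_nonsing_inv_cancel_left _ _ hdet),
    finrank_ker_fromBlocks_smul_one_smul_ones (div_ne_zero hα two_ne_zero)
      (div_ne_zero hβ two_ne_zero)]

end Smoother

/-- the eigenvalue `-1/2` of `C = B̃⁻¹B` has algebraic multiplicity
`2N-2` and geometric multiplicity `N-1` when `N > 2`. -/
theorem multiplicity_minus_half_collective_smoother
    (N : ℕ) (hN : 2 < N) (d : Fin N → ℝ) (hd : ∀ j, 0 < d j)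
    (ν : ℝ) (hν : 0 < ν)
    (D : Matrix (Fin N) (Fin N) ℂ) (hD : D = Matrix.diagonal fun j => (d j : ℂ) / N)
    (Btil : Matrix (Fin N ⊕ Fin N) (Fin N ⊕ Fin N) ℂ)
    (hBtil : Btil = Matrix.fromBlocks
      (((N : ℂ))⁻¹ • (1 : Matrix (Fin N) (Fin N) ℂ)) D D
      (-(((ν : ℂ) * (N : ℂ) ^ 2)⁻¹) • Matrix.of fun _ _ => (1 : ℂ)))
    (B : Matrix (Fin N ⊕ Fin N) (Fin N ⊕ Fin N) ℂ)
    (hB : B = Matrix.fromBlocks 0 (-(1 / 2 : ℂ) • D) (-(1 / 2 : ℂ) • D) 0)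
    (C : Matrix (Fin N ⊕ Fin N) (Fin N ⊕ Fin N) ℂ) (hC : C = Btil⁻¹ * B) :
    (Matrix.charpoly C).rootMultiplicity (-(1 / 2 : ℂ)) = 2 * N - 2 ∧
    Module.finrank ℂ
      (LinearMap.ker ((C - (-(1 / 2 : ℂ)) • (1 : Matrix (Fin N ⊕ Fin N) (Fin N ⊕ Fin N) ℂ)).mulVecLin))
      = N - 1 := by
  subst hC hB hBtil hD
  have : Nonempty (Fin N) := ⟨⟨0, by omega⟩⟩
  have hN0 : (N : ℂ) ≠ 0 := by exact_mod_cast (by omega : N ≠ 0)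
  have hα : (N : ℂ)⁻¹ ≠ 0 := inv_ne_zero hN0
  have hβ : -((ν : ℂ) * N ^ 2)⁻¹ ≠ 0 := by simp [hN0, hν.ne']
  have he : ∀ j, (d j : ℂ) / N ≠ 0 := fun j => div_ne_zero (by simp [(hd j).ne']) hN0
  have hαβS : (N : ℂ)⁻¹ * -((ν : ℂ) * N ^ 2)⁻¹ * ∑ j, (((d j : ℂ) / N) ^ 2)⁻¹ =
      ((-(ν * N ^ 3)⁻¹ * ∑ j, ((d j / N) ^ 2)⁻¹ : ℝ) : ℂ) := by
    push_cast; ring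
  have hS : 0 < ∑ j, ((d j / N) ^ 2)⁻¹ :=
    Finset.sum_pos (fun j _ => by have := hd j; positivity) Finset.univ_nonempty
  have hνN : 0 < ν * N ^ 3 := by positivity
  have hκ : 1 - (N : ℂ)⁻¹ * -((ν : ℂ) * N ^ 2)⁻¹ * ∑ j, (((d j : ℂ) / N) ^ 2)⁻¹ ≠ 0 := by
    rw [hαβS, ← Complex.ofReal_one, ← Complex.ofReal_sub, Complex.ofReal_ne_zero, neg_mul,
      sub_neg_eq_add]
    positivity
  have hαβS_ne : (N : ℂ)⁻¹ * -((ν : ℂ) * N ^ 2)⁻¹ * ∑ j, (((d j : ℂ) / N) ^ 2)⁻¹ ≠ 0 := by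
    rw [hαβS, Complex.ofReal_ne_zero]
    exact mul_ne_zero (neg_ne_zero.2 (inv_ne_zero hνN.ne')) hS.ne'
  have h1 := rootMultiplicity_charpoly_tildeB_inv_mul_offDiagB hα he hκ hαβS_ne
  have h2 := finrank_ker_tildeB_inv_mul_offDiagB_add_half hα hβ he hκ
  rw [Fintype.card_fin] at h1 h2
  exact ⟨h1, h2⟩
end

section
/- Let $\widehat{C} = L + \mathbf{a}\mathbf{c}^\top$ where $L = \begin{pmatrix} I & 0 \\ -D^{-1}/N & I \end{pmatrix}$, $\mathbf{a} = \Gamma N \begin{pmatrix} -\widetilde{\mathbf{d}}^{-1} \\ \widetilde{\mathbf{d}}^{-2} \end{pmatrix}$, $\mathbf{c} = \begin{pmatrix} \widetilde{\mathbf{d}}^{-1} \\ -\mathbf{1} \end{pmatrix}$, with $\widetilde{\mathbf{d}}$ a vector of positive entries, $D = \mathrm{diag}(\widetilde{\mathbf{d}})/N$, and $\Gamma > 0$. If $N > 2$, then every vector $\mathbf{v} = (0, \mathbf{v}_2)$ with $\mathbf{v}_2 \in \mathbb{R}^N$ satisfying $\mathbf{1}^\top \mathbf{v}_2 = 0$ is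 an eigenvector of $\widehat{C}$ with eigenvalue $1$; hence $\lambda = 1$ is an eigenvalue of $\widehat{C}$ with geometric multiplicity at least $N - 1$. -/
open Matrix

lemma key_mulvec (N : ℕ) (dtil : Fin N → ℝ)
    (Γ : ℝ)
    (D : Matrix (Fin N) (Fin N) ℝ)
    (L : Matrix (Fin N ⊕ Fin N) (Fin N ⊕ Fin N) ℝ)
    (hL : L = Matrix.fromBlocks 1 0 (-((N : ℝ))⁻¹ • D⁻¹) 1)
    (a c : Fin N ⊕ Fin N → ℝ)
    (ha : a = Sum.elim (fun j => Γ * N * (-(dtil j)⁻¹)) (fun j => Γ * N * ((dtil j) ^ 2)⁻¹))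
    (hc : c = Sum.elim (fun j => (dtil j)⁻¹) (fun _ => -1))
    (Chat : Matrix (Fin N ⊕ Fin N) (Fin N ⊕ Fin N) ℝ)
    (hChat : Chat = L + Matrix.vecMulVec a c)
    (v₂ : Fin N → ℝ) (hv : (∑ j, v₂ j) = 0) :
    Chat.mulVec (Sum.elim (fun _ => (0 : ℝ)) v₂) = Sum.elim (fun _ => (0 : ℝ)) v₂ := by
  have hdot : c ⬝ᵥ Sum.elim (fun _ => (0 : ℝ)) v₂ = 0 := by
    subst hc
    simp [dotProduct, Fintype.sum_sum_type, hv]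
  have hrank : (Matrix.vecMulVec a c).mulVec (Sum.elim (fun _ => (0 : ℝ)) v₂) = 0 := by
    ext i
    simp [Matrix.mulVec, Matrix.vecMulVec, dotProduct, Finset.mul_sum, mul_assoc]
    simpa [dotProduct, Finset.mul_sum, mul_assoc] using congrArg (a i * ·) hdot
  have hLv : L.mulVec (Sum.elim (fun _ => (0 : ℝ)) v₂) = Sum.elim (fun _ => (0 : ℝ)) v₂ := by
    subst hL
    rw [Matrix.fromBlocks_mulVec]
    simp [show (fun _ : Fin N => (0:ℝ)) = 0 from rfl, Matrix.mulVec_zero]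
  rw [hChat, Matrix.add_mulVec, hLv, hrank, add_zero]

def embSnd (N : ℕ) : (Fin N → ℝ) →ₗ[ℝ] (Fin N ⊕ Fin N → ℝ) where
  toFun v := Sum.elim (fun _ => (0:ℝ)) v
  map_add' u v := by ext (i|i) <;> simp
  map_smul' r v := by ext (i|i) <;> simp

lemma embSnd_inj (N : ℕ) : Function.Injective (embSnd N) := by
  intro u v h
  ext i
  exact congrFun h (Sum.inr i)

/-- vectors `(0, v₂)` with `1ᵀ v₂ = 0` are eigenvectors of
`Ĉ = L + a cᵀ` with eigenvalue `1`; hence the geometric multiplicity of the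
eigenvalue `1` is at least `N - 1`. -/
theorem eigenvectors_one_rank_one_update
    (N : ℕ) (hN : 2 < N) (dtil : Fin N → ℝ) (hdtil : ∀ j, 0 < dtil j)
    (Γ : ℝ) (hΓ : 0 < Γ)
    (D : Matrix (Fin N) (Fin N) ℝ) (hD : D = Matrix.diagonal fun j => dtil j / N)
    (L : Matrix (Fin N ⊕ Fin N) (Fin N ⊕ Fin N) ℝ)
    (hL : L = Matrix.fromBlocks 1 0 (-((N : ℝ))⁻¹ • D⁻¹) 1)
    (a c : Fin N ⊕ Fin N → ℝ)
    (ha : a = Sum.elim (fun j => Γ * N * (-(dtil j)⁻¹)) (fun j => Γ * N * ((dtil j) ^ 2)⁻¹))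
    (hc : c = Sum.elim (fun j => (dtil j)⁻¹) (fun _ => -1))
    (Chat : Matrix (Fin N ⊕ Fin N) (Fin N ⊕ Fin N) ℝ)
    (hChat : Chat = L + Matrix.vecMulVec a c) :
    (∀ v₂ : Fin N → ℝ, (∑ j, v₂ j) = 0 →
        Chat.mulVec (Sum.elim (fun _ => (0 : ℝ)) v₂) = Sum.elim (fun _ => (0 : ℝ)) v₂) ∧
    N - 1 ≤ Module.finrank ℝ
      (LinearMap.ker ((Chat - (1 : Matrix (Fin N ⊕ Fin N) (Fin N ⊕ Fin N) ℝ)).mulVecLin)) := by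
  have key := key_mulvec N dtil Γ D L hL a c ha hc Chat hChat
  refine ⟨key, ?_⟩
  set sumL : (Fin N → ℝ) →ₗ[ℝ] ℝ := ∑ j, LinearMap.proj j with hsumL
  have hsum_apply : ∀ v : Fin N → ℝ, sumL v = ∑ j, v j := by
    intro v; simp [hsumL, LinearMap.sum_apply]
  set K := LinearMap.ker sumL with hK
  have hKrank : Module.finrank ℝ K = N - 1 := by
    have hsurj : LinearMap.range sumL = ⊤ := by
      rw [LinearMap.range_eq_top]
      intro r
      refine ⟨Pi.single ⟨0, by omega⟩ r, ?_⟩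
      rw [hsum_apply]
      simp
    have := LinearMap.finrank_range_add_finrank_ker sumL
    rw [hsurj] at this
    simp only [finrank_top] at this
    rw [Module.finrank_self] at this
    rw [Module.finrank_pi] at this
    rw [Fintype.card_fin] at this
    rw [← hK] at this
    omega
  have hle : Submodule.map (embSnd N) K ≤
      LinearMap.ker ((Chat - (1 : Matrix (Fin N ⊕ Fin N) (Fin N ⊕ Fin N) ℝ)).mulVecLin) := by
    rintro x ⟨v, hv, rfl⟩
    have hv' : (∑ j, v j) = 0 := by rw [← hsum_apply]; exact hv
    simp only [LinearMap.mem_ker, Matrix.mulVecLin_apply, Matrix.sub_mulVec,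
      Matrix.one_mulVec]
    have : (embSnd N) v = Sum.elim (fun _ => (0:ℝ)) v := rfl
    rw [this, key v hv', sub_self]
  calc N - 1 = Module.finrank ℝ K := hKrank.symm
    _ = Module.finrank ℝ (Submodule.map (embSnd N) K) :=
        (Submodule.equivMapOfInjective _ (embSnd_inj N) K).finrank_eq
    _ ≤ _ := Submodule.finrank_mono hle
end

section
/- Let $X$ be a real-valued random variable in $L^1$ with continuous cumulative distribution function, and let $\lambda \in (0,1)$. Then $\mathrm{CVaR}_\lambda(X) := \mathbb{E}[X \mid X \geq \mathrm{VaR}_\lambda(X)]$ satisfies the Rockafellar–Uryasev formula $\mathrm{CVaR}_\lambda(X) = \inf_{t \in \mathbb{R}}\left\{ t + \frac{1}{1-\lambda}\mathbb{E}[(X - t)^+] \right\}$, and the infimum is attained at $t = \mathrm{VaR}_\lambda(X)$. -/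
/-!
Write `g(t) = t + E[(X - t)⁺] / (1 - λ)`. The function `t ↦ E[(X - t)⁺]` is convex with
subgradient `-P(X ≥ s)` at `s`, i.e. `E[(X - t)⁺] ≥ E[(X - s)⁺] + (s - t) P(X ≥ s)`.
Continuity of the CDF gives `P(X ≥ VaR) = 1 - λ`, so at `s = VaR` this inequality reads
`g(VaR) ≤ g(t)`, and `g(VaR) = E[X; X ≥ VaR] / (1 - λ) = CVaR`.
-/

open MeasureTheory ProbabilityTheory Filter Topology Set

section ExpectedShortfall

variable {Ω : Type*} [MeasurableSpace Ω] {μ : Measure Ω} {X : Ω → ℝ}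

lemma integral_max_sub_zero_eq_setIntegral (hXm : Measurable X) (t : ℝ) :
    ∫ ω, max (X ω - t) 0 ∂μ = ∫ ω in {ω | t ≤ X ω}, (X ω - t) ∂μ := by
  rw [← integral_indicator (measurableSet_le measurable_const hXm)]
  congr 1 with ω
  by_cases h : t ≤ X ω
  · simp [h]
  · simp [h, (not_le.1 h).le]

variable [IsFiniteMeasure μ]

lemma integral_max_sub_zero_add_mul_le (hXm : Measurable X) (hXi : Integrable X μ) (s t : ℝ) :
    ∫ ω, max (X ω - s) 0 ∂μ + (s - t) * μ.real {ω | s ≤ X ω} ≤ ∫ ω, max (X ω - t) 0 ∂μ := by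
  have hint : ∀ c, Integrable (fun ω => X ω - c) μ := fun c => hXi.sub (integrable_const c)
  calc ∫ ω, max (X ω - s) 0 ∂μ + (s - t) * μ.real {ω | s ≤ X ω}
      = ∫ ω in {ω | s ≤ X ω}, (X ω - s) ∂μ + ∫ _ in {ω | s ≤ X ω}, (s - t) ∂μ := by
        rw [integral_max_sub_zero_eq_setIntegral hXm, setIntegral_const, smul_eq_mul, mul_comm]
    _ = ∫ ω in {ω | s ≤ X ω}, (X ω - t) ∂μ := by
        rw [← integral_add (hint s).integrableOn (integrableOn_const (measure_ne_top _ _))]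
        simp_rw [sub_add_sub_cancel]
    _ ≤ ∫ ω in {ω | s ≤ X ω}, max (X ω - t) 0 ∂μ :=
        setIntegral_mono (hint t).integrableOn (hint t).pos_part.integrableOn
          fun ω => le_max_left _ _
    _ ≤ ∫ ω, max (X ω - t) 0 ∂μ :=
        setIntegral_le_integral (hint t).pos_part (Eventually.of_forall fun ω => le_max_right _ _)

noncomputable def cvarObjective (μ : Measure Ω) (X : Ω → ℝ) (lam t : ℝ) : ℝ :=
  t + (1 / (1 - lam)) * ∫ ω, max (X ω - t) 0 ∂μ

variable {lam q : ℝ}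

lemma cvarObjective_le (hXm : Measurable X) (hXi : Integrable X μ) (hlam : lam < 1)
    (hq : μ.real {ω | q ≤ X ω} = 1 - lam) (t : ℝ) :
    cvarObjective μ X lam q ≤ cvarObjective μ X lam t := by
  have hsub := integral_max_sub_zero_add_mul_le hXm hXi q t
  rw [hq] at hsub
  have hlam' : 0 < 1 - lam := sub_pos.2 hlam
  calc cvarObjective μ X lam q
      = t + 1 / (1 - lam) * (∫ ω, max (X ω - q) 0 ∂μ + (q - t) * (1 - lam)) := by
        unfold cvarObjective
        field_simp
        ring
    _ ≤ cvarObjective μ X lam t := by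
        unfold cvarObjective
        gcongr

lemma iInf_cvarObjective_eq (hXm : Measurable X) (hXi : Integrable X μ) (hlam : lam < 1)
    (hq : μ.real {ω | q ≤ X ω} = 1 - lam) :
    ⨅ t, cvarObjective μ X lam t = cvarObjective μ X lam q :=
  le_antisymm (ciInf_le ⟨_, forall_mem_range.2 (cvarObjective_le hXm hXi hlam hq)⟩ q)
    (le_ciInf (cvarObjective_le hXm hXi hlam hq))

lemma cvarObjective_eq_setIntegral_div (hXm : Measurable X) (hXi : Integrable X μ)
    (hlam : lam < 1) (hq : μ.real {ω | q ≤ X ω} = 1 - lam) :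
    cvarObjective μ X lam q = (∫ ω in {ω | q ≤ X ω}, X ω ∂μ) / (1 - lam) := by
  have hlam' : 1 - lam ≠ 0 := (sub_pos.2 hlam).ne'
  rw [cvarObjective, integral_max_sub_zero_eq_setIntegral hXm,
    integral_sub hXi.integrableOn (integrableOn_const (measure_ne_top _ _)), setIntegral_const,
    smul_eq_mul, hq]
  field_simp
  ring

end ExpectedShortfall

lemma Continuous.apply_sInf_setOf_le_eq {F : ℝ → ℝ} (hF : Continuous F) {c : ℝ}
    (hne : {t | c ≤ F t}.Nonempty) (hbdd : BddBelow {t | c ≤ F t}) :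
    F (sInf {t | c ≤ F t}) = c := by
  set q := sInf {t | c ≤ F t}
  refine le_antisymm (not_lt.1 fun hlt => ?_)
    ((isClosed_le continuous_const hF).csInf_mem hne hbdd)
  obtain ⟨t, hct, htq⟩ :=
    (((hF.tendsto q).eventually_const_lt hlt).filter_mono nhdsWithin_le_nhds |>.and
      self_mem_nhdsWithin).exists (f := 𝓝[<] q)
  exact (csInf_le hbdd hct.le).not_gt htq

namespace ProbabilityTheory

lemma cdf_sInf_setOf_le_cdf_eq {ν : Measure ℝ} (hν : Continuous (cdf ν)) {c : ℝ}
    (hc : c ∈ Ioo 0 1) :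
    cdf ν (sInf {t | c ≤ cdf ν t}) = c := by
  refine hν.apply_sInf_setOf_le_eq ?_ ?_
  · obtain ⟨t, ht⟩ := ((tendsto_cdf_atTop ν).eventually (eventually_gt_nhds hc.2)).exists
    exact ⟨t, ht.le⟩
  · obtain ⟨b, hb⟩ :=
      eventually_atBot.1 ((tendsto_cdf_atBot ν).eventually (eventually_lt_nhds hc.1))
    exact ⟨b, fun t ht => not_lt.1 fun htb => (hb t htb.le).not_ge ht⟩

lemma measureReal_Ici_eq_one_sub_cdf {ν : Measure ℝ} [IsProbabilityMeasure ν]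
    (hν : Continuous (cdf ν)) (x : ℝ) :
    ν.real (Ici x) = 1 - cdf ν x := by
  have hx : ν {x} = 0 := by
    calc ν {x} = (cdf ν).measure {x} := by rw [measure_cdf]
      _ = 0 := by
        rw [StieltjesFunction.measure_singleton, hν.continuousWithinAt.leftLim_eq, sub_self,
          ENNReal.ofReal_zero]
  rw [← measureReal_congr (Ioi_ae_eq_Ici' hx), ← compl_Iic,
    probReal_compl_eq_one_sub measurableSet_Iic, cdf_eq_real]

lemma cdf_map {Ω : Type*} [MeasurableSpace Ω] {μ : Measure Ω} [IsProbabilityMeasure μ]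
    {X : Ω → ℝ} (hX : Measurable X) (t : ℝ) : cdf (μ.map X) t = μ.real {ω | X ω ≤ t} := by
  have : IsProbabilityMeasure (μ.map X) := Measure.isProbabilityMeasure_map hX.aemeasurable
  rw [cdf_eq_real, map_measureReal_apply hX measurableSet_Iic]
  rfl

end ProbabilityTheory

/-- Rockafellar–Uryasev formula for the Conditional Value-at-Risk. -/
theorem rockafellar_uryasev_cvar
    {Ω : Type*} [MeasurableSpace Ω] (μ : Measure Ω) [IsProbabilityMeasure μ]
    (X : Ω → ℝ) (hXm : Measurable X) (hXi : Integrable X μ)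
    (hcdf : Continuous fun t : ℝ => (μ {ω | X ω ≤ t}).toReal)
    (lam : ℝ) (hlam : lam ∈ Set.Ioo (0 : ℝ) 1)
    (VaR : ℝ) (hVaR : VaR = sInf {t : ℝ | lam ≤ (μ {ω | X ω ≤ t}).toReal})
    (CVaR : ℝ)
    (hCVaR : CVaR = (∫ ω in {ω | VaR ≤ X ω}, X ω ∂μ) / (μ {ω | VaR ≤ X ω}).toReal) :
    CVaR = ⨅ t : ℝ, (t + (1 / (1 - lam)) * ∫ ω, max (X ω - t) 0 ∂μ) ∧
    VaR + (1 / (1 - lam)) * (∫ ω, max (X ω - VaR) 0 ∂μ)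
      = ⨅ t : ℝ, (t + (1 / (1 - lam)) * ∫ ω, max (X ω - t) 0 ∂μ) := by
  have : IsProbabilityMeasure (μ.map X) := Measure.isProbabilityMeasure_map hXm.aemeasurable
  simp only [← measureReal_def, ← cdf_map hXm] at hcdf hVaR hCVaR
  have htail : μ.real {ω | VaR ≤ X ω} = 1 - lam := by
    rw [show {ω | VaR ≤ X ω} = X ⁻¹' Ici VaR from rfl,
      ← map_measureReal_apply hXm measurableSet_Ici, measureReal_Ici_eq_one_sub_cdf hcdf, hVaR,
      cdf_sInf_setOf_le_cdf_eq hcdf hlam]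
  have hmin := iInf_cvarObjective_eq hXm hXi hlam.2 htail
  refine ⟨?_, hmin.symm⟩
  rw [hCVaR, htail, ← cvarObjective_eq_setIntegral_div hXm hXi hlam.2 htail]
  exact hmin.symm
end
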